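/- Let K be a convex body in R^d, let x ∈ K, and let x' ∈ M'(x) = M^{1/5}(x). Then 2^d · v(x) >= v(x') and v(x') >= v(x)/2^d, where v(z) denotes the infimum of the Lebesgue measures of caps of K containing z. -/

import Mathlib

open Set MeasureTheory Metric
open scoped Pointwise ENNReal

/-- The Macbeath region `M^λ(x) = x + λ((K − x) ∩ (x − K))`. -/
def macbeath {d : ℕ} (K : Set (EuclideanSpace ℝ (Fin d)))
    (x : EuclideanSpace ℝ (Fin d)) (lam : ℝ) : Set (EuclideanSpace ℝ (Fin d)) :=
  (fun v => x + lam • v) '' ((K - {x}) ∩ ({x} - K))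

/-- A cap of `K`: a nonempty intersection of `K` with a halfspace. -/
def IsCap {d : ℕ} (K C : Set (EuclideanSpace ℝ (Fin d))) : Prop :=
  C.Nonempty ∧ ∃ u : EuclideanSpace ℝ (Fin d), ‖u‖ = 1 ∧ ∃ c : ℝ,
    C = {x ∈ K | c ≤ (inner ℝ u x : ℝ)}

/-- `v(z)`: the infimum of the volumes of caps of `K` containing `z`. -/
noncomputable def minCapVol {d : ℕ} (K : Set (EuclideanSpace ℝ (Fin d)))
    (z : EuclideanSpace ℝ (Fin d)) : ℝ≥0∞ :=
  sInf {v | ∃ C : Set (EuclideanSpace ℝ (Fin d)), IsCap K C ∧ z ∈ C ∧ v = volume C}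

lemma double_cap_vol {d : ℕ} (C : Set (EuclideanSpace ℝ (Fin d)))
    (p : EuclideanSpace ℝ (Fin d)) :
    volume ((fun w => (2:ℝ) • w - p) '' C) = 2 ^ d * volume C := by
  have h1 : (fun w => (2:ℝ) • w - p) '' C = (-p) +ᵥ ((2:ℝ) • C) := by
    ext t
    simp only [Set.mem_image, Set.mem_vadd_set, Set.mem_smul_set, vadd_eq_add]
    constructor
    · rintro ⟨w, hw, rfl⟩; exact ⟨(2:ℝ) • w, ⟨w, hw, rfl⟩, by abel⟩
    · rintro ⟨s, ⟨w, hw, rfl⟩, rfl⟩; exact ⟨w, hw, by abel⟩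
  rw [h1, measure_vadd, Measure.addHaar_smul]
  simp [finrank_euclideanSpace_fin, abs_of_nonneg, ENNReal.ofReal_pow]

/-- Key: if `z ∈ K` lies in the doubled cap, then `v(z) ≤ 2^d · vol(C)`. -/
lemma key {d : ℕ} {K : Set (EuclideanSpace ℝ (Fin d))} (hK_conv : Convex ℝ K)
    (u : EuclideanSpace ℝ (Fin d)) (hu : ‖u‖ = 1) (c : ℝ)
    (p : EuclideanSpace ℝ (Fin d)) (hp : p ∈ K)
    (hpmax : ∀ y ∈ K, (inner ℝ u y : ℝ) ≤ inner ℝ u p)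
    (z : EuclideanSpace ℝ (Fin d)) (hz : z ∈ K)
    (hz2 : 2 * c - (inner ℝ u p : ℝ) ≤ inner ℝ u z) :
    minCapVol K z ≤ 2 ^ d * volume {y ∈ K | c ≤ (inner ℝ u y : ℝ)} := by
  set C : Set (EuclideanSpace ℝ (Fin d)) := {y ∈ K | c ≤ (inner ℝ u y : ℝ)} with hC
  set C₂ : Set (EuclideanSpace ℝ (Fin d)) :=
    {y ∈ K | 2 * c - (inner ℝ u p : ℝ) ≤ (inner ℝ u y : ℝ)} with hC₂
  have hzC₂ : z ∈ C₂ := ⟨hz, hz2⟩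
  have hcap : IsCap K C₂ := ⟨⟨z, hzC₂⟩, u, hu, 2 * c - (inner ℝ u p : ℝ), rfl⟩
  have hle1 : minCapVol K z ≤ volume C₂ := sInf_le ⟨C₂, hcap, hzC₂, rfl⟩
  have hsub : C₂ ⊆ (fun w => (2:ℝ) • w - p) '' C := by
    rintro y ⟨hyK, hyc⟩
    refine ⟨(1/2:ℝ) • y + (1/2:ℝ) • p, ⟨hK_conv hyK hp (by norm_num) (by norm_num)
      (by norm_num), ?_⟩, ?_⟩
    · have : (inner ℝ u ((1/2:ℝ) • y + (1/2:ℝ) • p) : ℝ)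
          = (1/2) * inner ℝ u y + (1/2) * inner ℝ u p := by
        simp [inner_add_right, real_inner_smul_right, Finset.mul_sum, mul_left_comm]
      rw [this]; linarith
    · show (2:ℝ) • ((1/2:ℝ) • y + (1/2:ℝ) • p) - p = y
      rw [smul_add, smul_smul, smul_smul]; norm_num
  calc minCapVol K z ≤ volume C₂ := hle1
    _ ≤ volume ((fun w => (2:ℝ) • w - p) '' C) := measure_mono hsub
    _ = 2 ^ d * volume C := double_cap_vol C p

/-- Lemma `core-vol`: if `x ∈ K` and `x' ∈ M'(x) = M^{1/5}(x)`, then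
`2^d · v(x) ≥ v(x') ≥ v(x)/2^d`. -/
theorem minCapVol_mem_shrunken_macbeath (d : ℕ)
    (K : Set (EuclideanSpace ℝ (Fin d)))
    (hK_compact : IsCompact K) (hK_conv : Convex ℝ K)
    (hK_int : (interior K).Nonempty)
    (x x' : EuclideanSpace ℝ (Fin d)) (hx : x ∈ K)
    (hx' : x' ∈ macbeath K x (1 / 5)) :
    minCapVol K x' ≤ 2 ^ d * minCapVol K x ∧
      minCapVol K x / 2 ^ d ≤ minCapVol K x' := by
  obtain ⟨v, ⟨hv1, hv2⟩, rfl⟩ := hx'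
  rw [Set.sub_singleton] at hv1
  obtain ⟨k₁, hk₁, hvk₁⟩ := hv1
  have hxv : x + v ∈ K := by
    have : x + v = k₁ := by rw [← hvk₁]; module
    rw [this]; exact hk₁
  rw [Set.singleton_sub] at hv2
  obtain ⟨k₂, hk₂, hvk₂⟩ := hv2
  have hxmv : x - v ∈ K := by
    have : x - v = k₂ := by rw [← hvk₂]; module
    rw [this]; exact hk₂
  have hx'K : x + (1/5 : ℝ) • v ∈ K := by
    have h := hK_conv hx hxv (by norm_num : (0:ℝ) ≤ 4/5) (by norm_num : (0:ℝ) ≤ 1/5)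
      (by norm_num)
    have heq : (4/5:ℝ) • x + (1/5:ℝ) • (x + v) = x + (1/5:ℝ) • v := by
      rw [smul_add]; rw [show (4/5:ℝ) • x + ((1/5:ℝ) • x + (1/5:ℝ) • v)
        = ((4/5:ℝ) + (1/5:ℝ)) • x + (1/5:ℝ) • v by rw [add_smul]; abel]
      norm_num
    rwa [heq] at h
  have hcont : ∀ (u : EuclideanSpace ℝ (Fin d)), ∃ p ∈ K,
      ∀ y ∈ K, (inner ℝ u y : ℝ) ≤ inner ℝ u p := by
    intro u
    obtain ⟨p, hpK, hpm⟩ := hK_compact.exists_isMaxOn ⟨x, hx⟩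
      ((continuous_const.inner continuous_id).continuousOn :
        ContinuousOn (fun y => (inner ℝ u y : ℝ)) K)
    exact ⟨p, hpK, hpm⟩
  have hIP : ∀ u : EuclideanSpace ℝ (Fin d),
      (inner ℝ u (x + (1/5:ℝ) • v) : ℝ) = inner ℝ u x + (1/5) * inner ℝ u v :=
    fun u => by simp [inner_add_right, real_inner_smul_right, Finset.mul_sum, mul_left_comm]
  -- direction 1 : for any cap C containing x, v(x') ≤ 2^d vol(C)
  have h1 : ∀ V ∈ {V | ∃ C : Set (EuclideanSpace ℝ (Fin d)),
      IsCap K C ∧ x ∈ C ∧ V = volume C}, minCapVol K (x + (1/5:ℝ) • v) ≤ 2 ^ d * V := by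
    rintro V ⟨C, ⟨-, u, hu, c, rfl⟩, ⟨hxK, hxc⟩, rfl⟩
    obtain ⟨p, hpK, hpmax⟩ := hcont u
    refine key hK_conv u hu c p hpK hpmax _ hx'K ?_
    have h1 := hpmax x hxK
    have h2 := hpmax (x - v) hxmv
    rw [inner_sub_right] at h2
    rw [hIP u]
    linarith
  -- direction 2 : for any cap C containing x', v(x) ≤ 2^d vol(C)
  have h2 : ∀ V ∈ {V | ∃ C : Set (EuclideanSpace ℝ (Fin d)),
      IsCap K C ∧ (x + (1/5:ℝ) • v) ∈ C ∧ V = volume C}, minCapVol K x ≤ 2 ^ d * V := by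
    rintro V ⟨C, ⟨-, u, hu, c, rfl⟩, ⟨hx'K', hx'c⟩, rfl⟩
    obtain ⟨p, hpK, hpmax⟩ := hcont u
    refine key hK_conv u hu c p hpK hpmax _ hx ?_
    have h1 := hpmax (x + v) hxv
    rw [inner_add_right] at h1
    rw [hIP u] at hx'c
    have h3 := hpmax x hx
    linarith
  have h2d0 : (2:ℝ≥0∞) ^ d ≠ 0 := pow_ne_zero d two_ne_zero
  have h2dt : (2:ℝ≥0∞) ^ d ≠ ⊤ := ENNReal.pow_ne_top ENNReal.ofNat_ne_top
  constructor
  · rw [mul_comm, ← ENNReal.div_le_iff_le_mul (Or.inl h2d0) (Or.inl h2dt)]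
    refine le_sInf fun V hV => ?_
    rw [ENNReal.div_le_iff_le_mul (Or.inl h2d0) (Or.inl h2dt), mul_comm]
    exact h1 V hV
  · rw [ENNReal.div_le_iff_le_mul (Or.inl h2d0) (Or.inl h2dt), mul_comm]
    show minCapVol K x ≤ 2 ^ d * sInf _
    rw [mul_comm, ← ENNReal.div_le_iff_le_mul (Or.inl h2d0) (Or.inl h2dt)]
    refine le_sInf fun V hV => ?_
    rw [ENNReal.div_le_iff_le_mul (Or.inl h2d0) (Or.inl h2dt), mul_comm]
    exact h2 V hV
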